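/- arXiv:2410.08072 — 3 statements merged into one kernel-verified Lean document; each statement's English description precedes it below -/
import Mathlib

section
/- Let (X, σ) be a DR system. The wandering set 𝔚 is σ⁻¹-invariant: if x ∈ Dom(σ) and σ(x) ∈ 𝔚, then x ∈ 𝔚. -/
open Set Filter Topology

namespace DR

variable {X : Type*}

/-- Domain of the `n`-fold iterate of the partial map `σ` with domain `D`. -/
def domIter (σ : X → X) (D : Set X) (n : ℕ) : Set X :=
  {x | ∀ i < n, σ^[i] x ∈ D}

/-- Forward image `σ^n(U) = σ^n(U ∩ Dom(σ^n))`. -/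
def fwd (σ : X → X) (D : Set X) (n : ℕ) (U : Set X) : Set X :=
  σ^[n] '' (U ∩ domIter σ D n)

/-- Preimage `σ^{-n}(V) = {x ∈ Dom(σ^n) : σ^n(x) ∈ V}`. -/
def bwd (σ : X → X) (D : Set X) (n : ℕ) (V : Set X) : Set X :=
  {x ∈ domIter σ D n | σ^[n] x ∈ V}

/-- The set `σ^{-k}(σ^k(U))` for `k : ℤ`, with the convention that for `k < 0`,
`σ^k` is the preimage under `σ^{|k|}` and `σ^{-k}` is the forward image. -/
def backFwd (σ : X → X) (D : Set X) (k : ℤ) (U : Set X) : Set X :=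
  if 0 ≤ k then bwd σ D k.toNat (fwd σ D k.toNat U)
  else fwd σ D (-k).toNat (bwd σ D (-k).toNat U)

variable [TopologicalSpace X]

/-- The wandering set of a Deaconu-Renault system. -/
def wandering (σ : X → X) (D : Set X) : Set X :=
  {x | ∃ U : Set X, IsOpen U ∧ x ∈ U ∧
    ∀ n ≥ 1, ∀ k : ℤ, fwd σ D n U ∩ backFwd σ D k U = ∅}

/-- `σ` restricted to the open set `D` is a local homeomorphism onto its image. -/
def IsLocalHomeoOn (σ : X → X) (D : Set X) : Prop :=
  ∀ x ∈ D, ∃ U : Set X, IsOpen U ∧ x ∈ U ∧ U ⊆ D ∧ ContinuousOn σ U ∧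
    InjOn σ U ∧ ∀ V ⊆ U, IsOpen V → IsOpen (σ '' V)

/-- A Deaconu-Renault system: `σ` is a local homeomorphism from the open set `D`
onto the open set `σ '' D`. -/
def IsDRSystem (σ : X → X) (D : Set X) : Prop :=
  IsOpen D ∧ IsOpen (σ '' D) ∧ IsLocalHomeoOn σ D

end DR

namespace DR

variable {X : Type*} {σ : X → X} {D : Set X}

lemma mem_domIter_zero (x : X) : x ∈ domIter σ D 0 := by
  intro i hi; omega

lemma mem_domIter_succ {n : ℕ} {x : X} :
    x ∈ domIter σ D (n + 1) ↔ x ∈ domIter σ D n ∧ σ^[n] x ∈ D := by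
  constructor
  · intro h
    exact ⟨fun i hi => h i (by omega), h n (by omega)⟩
  · rintro ⟨h1, h2⟩ i hi
    rcases Nat.lt_succ_iff_lt_or_eq.1 hi with hi' | rfl
    · exact h1 i hi'
    · exact h2

lemma mem_domIter_succ' {n : ℕ} {x : X} :
    x ∈ domIter σ D (n + 1) ↔ x ∈ D ∧ σ x ∈ domIter σ D n := by
  constructor
  · intro h
    refine ⟨h 0 (by omega), fun i hi => ?_⟩
    have := h (i + 1) (by omega)
    rwa [Function.iterate_succ_apply] at this
  · rintro ⟨h1, h2⟩ i hi
    cases i with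
    | zero => exact h1
    | succ m => rw [Function.iterate_succ_apply]; exact h2 m (by omega)

lemma mem_D_of_domIter {n : ℕ} {x : X} (hn : 1 ≤ n) (h : x ∈ domIter σ D n) : x ∈ D :=
  h 0 (by omega)

lemma fwd_succ_subset {U W : Set X} (hUW : ∀ u ∈ U, σ u ∈ W) (n : ℕ) :
    fwd σ D (n + 1) U ⊆ fwd σ D n W := by
  rintro z ⟨u, ⟨huU, hdom⟩, rfl⟩
  exact ⟨σ u, ⟨hUW u huU, (mem_domIter_succ'.1 hdom).2⟩,
    (Function.iterate_succ_apply σ n u).symm⟩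

end DR

/-- Let `(X, σ)` be a DR system. The wandering set `𝔚` is
`σ⁻¹`-invariant: if `x ∈ Dom(σ)` and `σ(x) ∈ 𝔚`, then `x ∈ 𝔚`. -/
theorem stmt8 {X : Type*} [TopologicalSpace X] [LocallyCompactSpace X] [T2Space X]
    (σ : X → X) (D : Set X) (hDR : DR.IsDRSystem σ D) (x : X) (hx : x ∈ D)
    (hσx : σ x ∈ DR.wandering σ D) :
    x ∈ DR.wandering σ D := by
  classical
  obtain ⟨hD, _, hlh⟩ := hDR
  obtain ⟨W, hWopen, hσxW, hW⟩ := hσx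
  obtain ⟨U', hU'open, hxU', hU'D, hcont, -, -⟩ := hlh x hx
  refine ⟨U' ∩ σ ⁻¹' W, hcont.isOpen_inter_preimage hU'open hWopen, ⟨hxU', hσxW⟩, ?_⟩
  set U : Set X := U' ∩ σ ⁻¹' W with hUdef
  have hUD : U ⊆ D := fun y hy => hU'D hy.1
  have hUW : ∀ u ∈ U, σ u ∈ W := fun u hu => hu.2
  intro n hn k
  by_contra hne
  obtain ⟨y, hy1, hy2⟩ := Set.nonempty_iff_ne_empty.2 hne
  -- y ∈ D in all cases
  have hyU_of : y ∈ DR.backFwd σ D 0 U → y ∈ U := by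
    intro h
    simp only [DR.backFwd, if_pos le_rfl, Int.toNat_zero] at h
    obtain ⟨-, u, ⟨huU, -⟩, hu⟩ := h
    have huy : u = y := by simpa using hu
    exact huy ▸ huU
  -- obtain u with y = σ^[n] u, u ∈ U ∩ domIter n
  obtain ⟨u, ⟨huU, hudom⟩, huy⟩ := hy1
  -- key: y ∈ D
  have hyD : y ∈ D := by
    rcases k with j | j
    · -- k = ofNat j
      cases j with
      | zero => exact hUD (hyU_of hy2)
      | succ m =>
        simp only [DR.backFwd, Int.ofNat_eq_coe, if_pos (by positivity : (0:ℤ) ≤ (m+1 : ℕ))] at hy2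
        have := hy2.1
        rw [Int.toNat_natCast] at this
        exact DR.mem_D_of_domIter (by omega) this
    · -- k = negSucc j
      simp only [DR.backFwd, if_neg ((Int.negSucc_lt_zero j).not_ge)] at hy2
      obtain ⟨w, ⟨⟨-, hwU⟩, -⟩, hwy⟩ := hy2
      rw [hwy] at hwU
      exact hUD hwU
  -- then u ∈ domIter (n+1), σ u ∈ W ∩ domIter n, so σ y ∈ fwd n W
  have hudom' : u ∈ DR.domIter σ D (n + 1) := DR.mem_domIter_succ.2 ⟨hudom, huy ▸ hyD⟩
  have key1 : σ y ∈ DR.fwd σ D n W := by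
    refine DR.fwd_succ_subset hUW n ⟨u, ⟨huU, hudom'⟩, ?_⟩
    rw [Function.iterate_succ_apply', huy]
  have key2 : σ y ∈ DR.backFwd σ D (k - 1) W := by
    rcases k with j | j
    · cases j with
      | zero =>
        -- k - 1 = -1 : σ y ∈ fwd 1 (bwd 1 W)
        have hyU : y ∈ U := hyU_of hy2
        rw [show (Int.ofNat 0 - 1 : ℤ) = -1 by decide]
        simp only [DR.backFwd, if_neg (by decide : ¬ (0:ℤ) ≤ -1)]
        rw [show (-(-1 : ℤ)).toNat = 1 by decide]
        refine ⟨y, ⟨⟨?_, ?_⟩, ?_⟩, rfl⟩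
        · intro i hi
          interval_cases i
          simpa using hyD
        · simpa using hUW y hyU
        · intro i hi
          interval_cases i
          simpa using hyD
      | succ m =>
        -- k = m+1, k - 1 = m ≥ 0
        have h0 : (0:ℤ) ≤ (m + 1 : ℕ) := by positivity
        simp only [DR.backFwd, Int.ofNat_eq_coe, if_pos h0] at hy2
        rw [Int.toNat_natCast] at hy2
        obtain ⟨hydom, hyfwd⟩ := hy2
        have h1 : (0:ℤ) ≤ ((m + 1 : ℕ) : ℤ) - 1 := by omega
        have h2 : (((m + 1 : ℕ) : ℤ) - 1).toNat = m := by omega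
        simp only [DR.backFwd, Int.ofNat_eq_coe, if_pos h1, h2]
        refine ⟨(DR.mem_domIter_succ'.1 hydom).2, ?_⟩
        have : σ^[m] (σ y) = σ^[m + 1] y := (Function.iterate_succ_apply σ m y).symm
        rw [this]
        exact DR.fwd_succ_subset hUW m hyfwd
    · -- k = negSucc j, so -k = j+1, -(k-1) = j+2
      have hkneg : ¬ (0:ℤ) ≤ Int.negSucc j := (Int.negSucc_lt_zero j).not_ge
      simp only [DR.backFwd, if_neg hkneg] at hy2
      have hj1 : (-(Int.negSucc j)).toNat = j + 1 := by
        rw [Int.negSucc_eq]; omega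
      rw [hj1] at hy2
      obtain ⟨w, ⟨⟨hwdom, hwU⟩, -⟩, hwy⟩ := hy2
      have hyU : y ∈ U := hwy ▸ hwU
      have hkneg' : ¬ (0:ℤ) ≤ Int.negSucc j - 1 := by rw [Int.negSucc_eq]; omega
      have hj2 : (-(Int.negSucc j - 1)).toNat = j + 2 := by
        rw [Int.negSucc_eq]; omega
      simp only [DR.backFwd, if_neg hkneg', hj2]
      have hwdom' : w ∈ DR.domIter σ D (j + 2) :=
        DR.mem_domIter_succ.2 ⟨hwdom, hwy ▸ hyD⟩
      have hiter : σ^[j + 2] w = σ y := by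
        rw [Function.iterate_succ_apply', hwy]
      refine ⟨w, ⟨⟨hwdom', ?_⟩, hwdom'⟩, hiter⟩
      rw [hiter]
      exact hUW y hyU
  have := hW n hn (k - 1)
  exact absurd this (Set.nonempty_iff_ne_empty.1 ⟨σ y, key1, key2⟩)
end

section
/- Let (X, σ) be a DR system. The wandering set 𝔚 is σ-invariant: if x ∈ 𝔚 ∩ Dom(σ), then σ(x) ∈ 𝔚. -/
open Set Filter Topology

/-- Let `(X, σ)` be a DR system. The wandering set `𝔚` is
`σ`-invariant: if `x ∈ 𝔚 ∩ Dom(σ)`, then `σ(x) ∈ 𝔚`. -/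
theorem stmt9 {X : Type*} [TopologicalSpace X] [LocallyCompactSpace X] [T2Space X]
    (σ : X → X) (D : Set X) (hDR : DR.IsDRSystem σ D) (x : X)
    (hx : x ∈ DR.wandering σ D ∩ D) :
    σ x ∈ DR.wandering σ D := by
  obtain ⟨⟨U, hUo, hxU, hU⟩, hxD⟩ := hx
  obtain ⟨U', hU'o, hxU', hU'D, -, -, hopen⟩ := hDR.2.2 x hxD
  refine ⟨σ '' (U ∩ U'), hopen _ Set.inter_subset_right (hUo.inter hU'o),
    ⟨x, ⟨hxU, hxU'⟩, rfl⟩, ?_⟩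
  intro n hn k
  rw [Set.eq_empty_iff_forall_notMem]
  rintro z ⟨hz1, hz2⟩
  obtain ⟨v1, ⟨⟨w1, hw1W, rfl⟩, hv1dom⟩, rfl⟩ := hz1
  have hw1D : w1 ∈ D := hU'D hw1W.2
  have hw1dom : w1 ∈ DR.domIter σ D (n + 1) := by
    intro i hi
    match i with
    | 0 => exact hw1D
    | j + 1 =>
      rw [Function.iterate_succ_apply]
      exact hv1dom j (by omega)
  set z' := σ^[n] w1 with hz'
  have hz'D : z' ∈ D := hw1dom n (by omega)
  have hσz' : σ z' = σ^[n] (σ w1) := by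
    rw [hz', ← Function.iterate_succ_apply' σ n w1, Function.iterate_succ_apply]
  have hz'fwd : z' ∈ DR.fwd σ D n U :=
    ⟨w1, ⟨hw1W.1, fun i hi => hw1dom i (by omega)⟩, rfl⟩
  by_cases hk : 0 ≤ k
  · rw [DR.backFwd, if_pos hk] at hz2
    set m := k.toNat with hm
    obtain ⟨hzdom, hzfwd⟩ := hz2
    obtain ⟨v2, ⟨⟨w2, hw2W, rfl⟩, hv2dom⟩, heq⟩ := hzfwd
    have hw2D : w2 ∈ D := hU'D hw2W.2
    have hw2dom : w2 ∈ DR.domIter σ D (m + 1) := by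
      intro i hi
      match i with
      | 0 => exact hw2D
      | j + 1 =>
        rw [Function.iterate_succ_apply]
        exact hv2dom j (by omega)
    have hz'dom : z' ∈ DR.domIter σ D (m + 1) := by
      intro i hi
      match i with
      | 0 => exact hz'D
      | j + 1 =>
        rw [Function.iterate_succ_apply, hσz']
        exact hzdom j (by omega)
    have hmem : z' ∈ DR.fwd σ D n U ∩ DR.backFwd σ D ((m + 1 : ℕ) : ℤ) U := by
      refine ⟨hz'fwd, ?_⟩
      rw [DR.backFwd, if_pos (by positivity)]
      have ht : (((m + 1 : ℕ) : ℤ)).toNat = m + 1 := by omega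
      rw [ht]
      refine ⟨hz'dom, ⟨w2, ⟨hw2W.1, hw2dom⟩, ?_⟩⟩
      rw [Function.iterate_succ_apply σ m w2, Function.iterate_succ_apply σ m z', hσz']
      exact heq
    rw [hU n hn ((m + 1 : ℕ) : ℤ)] at hmem
    exact hmem
  · rw [DR.backFwd, if_neg hk] at hz2
    obtain ⟨y, ⟨⟨hydom, hyV⟩, -⟩, hyeq⟩ := hz2
    rw [hyeq] at hyV
    obtain ⟨w2, hw2W, hw2eq⟩ := hyV
    have hmem : z' ∈ DR.fwd σ D n U ∩ DR.backFwd σ D 1 U := by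
      refine ⟨hz'fwd, ?_⟩
      rw [DR.backFwd, if_pos (by norm_num)]
      have ht : (1 : ℤ).toNat = 1 := rfl
      rw [ht]
      refine ⟨fun i hi => by interval_cases i; exact hz'D, ?_⟩
      refine ⟨w2, ⟨hw2W.1, fun i hi => by interval_cases i; exact hU'D hw2W.2⟩, ?_⟩
      rw [show σ^[1] z' = σ z' from rfl, show σ^[1] w2 = σ w2 from rfl, hσz', hw2eq]
    rw [hU n hn 1] at hmem
    exact hmem
end

section
/- Let (X, σ) be a DR system on a metric space, x ∈ X, n ∈ ℕ, ε > 0. If x ∈ Dom(σ^{n-1}), then B(x, n, ε) = U(x, n, ε) and B(x, n, ε) ⊆ Dom(σ^{n-1}), where U(x,n,ε) = ⋂_{i ∈ I_n(x)} σ^{-i}(B(σ^i(x), ε)) and B(x,n,ε) = {y ∈ X : I_n(y) = I_n(x) and d_n(y,x) < ε}. -/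
open Set Filter Topology

namespace DR

variable [PseudoMetricSpace X]

/-- The Bowen-type distance `d_n(x,y) = max_{i ∈ I_n(x) ∩ I_n(y)} d(σ^i x, σ^i y)`,
where `I_n(x) = {i ∈ {0,…,n−1} : x ∈ Dom(σ^i)}`. -/
noncomputable def dn (σ : X → X) (D : Set X) (n : ℕ) (x y : X) : ℝ :=
  sSup {r | ∃ i < n, x ∈ domIter σ D i ∧ y ∈ domIter σ D i ∧
    r = dist (σ^[i] x) (σ^[i] y)}

end DR

namespace DR

variable [PseudoMetricSpace X]

/-- The dynamical ball `U(x,n,ε) = ⋂_{i ∈ I_n(x)} σ^{-i}(B(σ^i(x), ε))`. -/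
def Uball (σ : X → X) (D : Set X) (n : ℕ) (ε : ℝ) (x : X) : Set X :=
  ⋂ i ∈ {i : ℕ | i < n ∧ x ∈ domIter σ D i},
    {y ∈ domIter σ D i | dist (σ^[i] y) (σ^[i] x) < ε}

/-- The dynamical ball `B(x,n,ε) = {y : I_n(y) = I_n(x) and d_n(y,x) < ε}`. -/
noncomputable def Bball (σ : X → X) (D : Set X) (n : ℕ) (ε : ℝ) (x : X) : Set X :=
  {y | (∀ i < n, (y ∈ domIter σ D i ↔ x ∈ domIter σ D i)) ∧ dn σ D n y x < ε}

end DR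

/-- Let `(X, σ)` be a DR system on a metric space, `x ∈ X`, `n ∈ ℕ`,
`ε > 0`. If `x ∈ Dom(σ^{n-1})`, then `B(x, n, ε) = U(x, n, ε)` and
`B(x, n, ε) ⊆ Dom(σ^{n-1})`. -/
theorem stmt17 {X : Type*} [MetricSpace X] [LocallyCompactSpace X]
    (σ : X → X) (D : Set X) (hDR : DR.IsDRSystem σ D)
    (x : X) (n : ℕ) (hn : 1 ≤ n) (ε : ℝ) (hε : 0 < ε)
    (hx : x ∈ DR.domIter σ D (n - 1)) :
    DR.Bball σ D n ε x = DR.Uball σ D n ε x ∧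
      DR.Bball σ D n ε x ⊆ DR.domIter σ D (n - 1) := by
  have hxi : ∀ i < n, x ∈ DR.domIter σ D i := by
    intro i hi j hj
    exact hx j (by omega)
  have hBsub : DR.Bball σ D n ε x ⊆ DR.domIter σ D (n - 1) := by
    intro y hy
    exact (hy.1 (n - 1) (by omega)).mpr hx
  refine ⟨?_, hBsub⟩
  ext y
  have hSfin : {r | ∃ i < n, y ∈ DR.domIter σ D i ∧ x ∈ DR.domIter σ D i ∧
      r = dist (σ^[i] y) (σ^[i] x)}.Finite := by
    apply Set.Finite.subset ((Set.finite_Iio n).image (fun i => dist (σ^[i] y) (σ^[i] x)))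
    rintro r ⟨i, hi, -, -, rfl⟩
    exact ⟨i, hi, rfl⟩
  simp only [DR.Bball, DR.Uball, Set.mem_setOf_eq, Set.mem_iInter]
  constructor
  · rintro ⟨hdom, hdn⟩
    intro i hi
    have hyi : y ∈ DR.domIter σ D i := (hdom i hi.1).mpr hi.2
    refine ⟨hyi, ?_⟩
    have hle : dist (σ^[i] y) (σ^[i] x) ≤ DR.dn σ D n y x :=
      le_csSup hSfin.bddAbove ⟨i, hi.1, hyi, hi.2, rfl⟩
    exact lt_of_le_of_lt hle hdn
  · intro h
    have hy : ∀ i < n, y ∈ DR.domIter σ D i := fun i hi => (h i ⟨hi, hxi i hi⟩).1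
    refine ⟨fun i hi => ⟨fun _ => hxi i hi, fun _ => hy i hi⟩, ?_⟩
    have h0 : y ∈ DR.domIter σ D 0 := fun j hj => absurd hj (Nat.not_lt_zero j)
    have hx0 : x ∈ DR.domIter σ D 0 := fun j hj => absurd hj (Nat.not_lt_zero j)
    have hne : {r | ∃ i < n, y ∈ DR.domIter σ D i ∧ x ∈ DR.domIter σ D i ∧
        r = dist (σ^[i] y) (σ^[i] x)}.Nonempty :=
      ⟨dist (σ^[0] y) (σ^[0] x), 0, hn, h0, hx0, rfl⟩
    have hmem := hne.csSup_mem hSfin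
    obtain ⟨i, hi, hyi, hxi', heq⟩ := hmem
    have := (h i ⟨hi, hxi'⟩).2
    show sSup _ < ε
    rw [heq]
    exact this
end
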